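/- arXiv:1802.05367 — 5 statements merged into one kernel-verified Lean document; each statement's English description precedes it below -/
import Mathlib

section
/- Let p be a prime, G a finite group, and Z a p-subgroup of the center of G. Let V be a finite-dimensional complex vector space with dim V = n, where p does not divide n, and let ρ : G → GL(V) be a representation such that every z ∈ Z acts on V as the scalar η(z), for a group homomorphism η : Z → ℂˣ. Then there exists a group homomorphism δ : G → ℂˣ whose restriction to Z equals η. -/
/-!
The determinantal character `g ↦ det ρ(g)` restricts to `Z` as `η ^ n`. Since `n` is prime to
`|Z|`, a power `m` with `n m ≡ 1 (mod |Z|)` inverts `η ↦ η ^ n` on characters of `Z`, so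
`(det ∘ ρ) ^ m` extends `η`.
-/

theorem LinearMap.det_eq_pow_finrank_of_forall_apply_eq_smul {K V : Type*} [Field K]
    [AddCommGroup V] [Module K V] {f : V →ₗ[K] V} {c : K} (hf : ∀ v, f v = c • v) :
    LinearMap.det f = c ^ Module.finrank K V := by
  rw [show f = c • LinearMap.id from LinearMap.ext hf, LinearMap.det_smul, LinearMap.det_id,
    mul_one]

theorem exists_extension_of_coprime_pow_extension {G M : Type*} [Group G] [CommGroup M]
    {H : Subgroup G} {n : ℕ} (hn : n.Coprime (Nat.card H)) (η : H →* M) (χ : G →* M)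
    (hχ : ∀ h : H, χ h = η h ^ n) : ∃ δ : G →* M, ∀ h : H, δ h = η h := by
  obtain ⟨a, b, hab⟩ := Nat.isCoprime_iff_coprime.mpr hn
  refine ⟨χ ^ a, fun h => ?_⟩
  have hcard : η h ^ Nat.card H = 1 := by rw [← map_pow, pow_card_eq_one', map_one]
  calc (χ ^ a) h = η h ^ (a * n + b * Nat.card H) := by
        rw [MonoidHom.zpow_apply, hχ, zpow_add, zpow_mul', zpow_mul', zpow_natCast,
          zpow_natCast, hcard, one_zpow, mul_one]
    _ = η h := by rw [hab, zpow_one]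

theorem exists_linear_extension_of_central_scalar_action_general
    {p : ℕ} (hp : p.Prime) {G : Type*} [Group G] [Finite G]
    (Z : Subgroup G) (hZp : IsPGroup p Z)
    {V : Type*} [AddCommGroup V] [Module ℂ V]
    {n : ℕ} (hn : Module.finrank ℂ V = n) (hpn : ¬ p ∣ n)
    (ρ : G →* (V →ₗ[ℂ] V)ˣ) (η : Z →* ℂˣ)
    (hρ : ∀ z : Z, ∀ v : V, (ρ (z : G) : V →ₗ[ℂ] V) v = (η z : ℂ) • v) :
    ∃ δ : G →* ℂˣ, ∀ z : Z, δ (z : G) = η z := by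
  have : Fact p.Prime := ⟨hp⟩
  have hcop : n.Coprime (Nat.card Z) := by
    obtain ⟨k, hk⟩ := IsPGroup.iff_card.mp hZp
    exact hk ▸ hp.coprime_pow_of_not_dvd hpn
  refine exists_extension_of_coprime_pow_extension hcop η
    ((Units.map (LinearMap.det : (V →ₗ[ℂ] V) →* ℂ)).comp ρ) fun z => Units.ext ?_
  simp only [MonoidHom.comp_apply, Units.coe_map, Units.val_pow_eq_pow_val,
    LinearMap.det_eq_pow_finrank_of_forall_apply_eq_smul (hρ z), hn]

/-- The representation-theoretic content of Lemma 3 (after Murai): if `Z` is a central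
`p`-subgroup of a finite group `G`, and `ρ : G → GL(V)` is a representation of dimension
`n` prime to `p` on which every `z ∈ Z` acts as the scalar `η(z)`, then the linear
character `η` of `Z` extends to a linear character `δ` of `G`. -/
theorem exists_linear_extension_of_central_scalar_action
    {p : ℕ} (hp : p.Prime) {G : Type*} [Group G] [Finite G]
    (Z : Subgroup G) (hZc : Z ≤ Subgroup.center G) (hZp : IsPGroup p Z)
    {V : Type*} [AddCommGroup V] [Module ℂ V] [FiniteDimensional ℂ V]
    {n : ℕ} (hn : Module.finrank ℂ V = n) (hpn : ¬ p ∣ n)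
    (ρ : G →* (V →ₗ[ℂ] V)ˣ) (η : Z →* ℂˣ)
    (hρ : ∀ z : Z, ∀ v : V, (ρ (z : G) : V →ₗ[ℂ] V) v = (η z : ℂ) • v) :
    ∃ δ : G →* ℂˣ, ∀ z : Z, δ (z : G) = η z :=
  exists_linear_extension_of_central_scalar_action_general hp Z hZp hn hpn ρ η hρ
end

section
/- Let P be a finite group and let σ = (Q₀ < Q₁ < ⋯ < Q_m) be a normal chain of subgroups of P, i.e., each Qᵢ is normal in Q_m. Let N_P(σ) = ⋂_{i=0}^{m} N_P(Qᵢ) denote the common normalizer of the terms of σ, and suppose Q_m is a proper subgroup of N_P(σ). Then the extended tuple σ⁺ = (Q₀ < Q₁ < ⋯ < Q_m < N_P(σ)) is again a normal chain (every term is normal in the last term N_P(σ)), and N_P(σ⁺) = N_P(σ). -/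
/-- The chain obtained from `σ = (Q₀ < ⋯ < Q_m)` by appending the common normalizer
`N_P(σ) = ⋂ᵢ N_P(Qᵢ)` as a new last term. -/
def appendNormalizer {P : Type*} [Group P] {m : ℕ} (Q : Fin (m + 1) → Subgroup P) :
    Fin (m + 2) → Subgroup P :=
  Fin.snoc Q (⨅ i, Subgroup.normalizer (Q i : Set P))

namespace Fin

theorem strictMono_snoc {α : Type*} [Preorder α] {n : ℕ} {f : Fin (n + 1) → α}
    (hf : StrictMono f) {x : α} (hx : f (last n) < x) :
    StrictMono (snoc f x : Fin (n + 2) → α) := by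
  refine strictMono_iff_lt_succ.mpr fun i => ?_
  cases i using lastCases with
  | last => simpa using hx
  | cast i =>
    rw [succ_castSucc, snoc_castSucc, snoc_castSucc]
    exact strictMono_iff_lt_succ.mp hf i

theorem iInf_eq_iInf_castSucc_inf_last {α : Type*} [CompleteLattice α] {n : ℕ}
    (g : Fin (n + 1) → α) : ⨅ j, g j = (⨅ i : Fin n, g i.castSucc) ⊓ g (last n) :=
  le_antisymm (le_inf (le_iInf fun i : Fin n => iInf_le _ i.castSucc) (iInf_le _ _))
    (le_iInf (lastCases inf_le_right fun i => inf_le_left.trans (iInf_le _ i)))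

end Fin

open Subgroup

section

variable {P : Type*} [Group P] {m : ℕ} (Q : Fin (m + 1) → Subgroup P)

theorem iInf_normalizer_appendNormalizer :
    ⨅ j, normalizer (appendNormalizer Q j : Set P) = ⨅ i, normalizer (Q i : Set P) := by
  rw [Fin.iInf_eq_iInf_castSucc_inf_last]
  -- the appended term only contributes its own normalizer, which contains it
  simpa [appendNormalizer] using le_normalizer (H := ⨅ i, normalizer (Q i : Set P))

theorem appendNormalizer_last_le_normalizer (j : Fin (m + 2)) :
    appendNormalizer Q (Fin.last (m + 1)) ≤ normalizer (appendNormalizer Q j : Set P) := by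
  have hlast : appendNormalizer Q (Fin.last (m + 1)) = ⨅ i, normalizer (Q i : Set P) :=
    Fin.snoc_last _ _
  rw [hlast, ← iInf_normalizer_appendNormalizer]
  exact iInf_le _ j

end

theorem append_normalizer_is_normal_chain_general
    {P : Type*} [Group P] {m : ℕ}
    (Q : Fin (m + 1) → Subgroup P) (hmono : StrictMono Q)
    (hlt : Q (Fin.last m) < ⨅ i, Subgroup.normalizer (Q i : Set P)) :
    StrictMono (appendNormalizer Q) ∧
    (∀ j : Fin (m + 2),
      appendNormalizer Q (Fin.last (m + 1)) ≤ Subgroup.normalizer (appendNormalizer Q j : Set P)) ∧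
    ⨅ j, Subgroup.normalizer (appendNormalizer Q j : Set P) = ⨅ i, Subgroup.normalizer (Q i : Set P) :=
  ⟨Fin.strictMono_snoc hmono hlt, appendNormalizer_last_le_normalizer Q,
    iInf_normalizer_appendNormalizer Q⟩

/-- If `σ = (Q₀ < ⋯ < Q_m)` is a normal chain of subgroups of a finite group `P`
(each `Qᵢ` normal in `Q_m`) with `Q_m` properly contained in the common normalizer
`N_P(σ) = ⋂ᵢ N_P(Qᵢ)`, then the extended tuple `σ⁺ = (Q₀ < ⋯ < Q_m < N_P(σ))` is again
a normal chain (every term normal in its last term), and `N_P(σ⁺) = N_P(σ)`. -/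
theorem append_normalizer_is_normal_chain
    {P : Type*} [Group P] [Finite P] {m : ℕ}
    (Q : Fin (m + 1) → Subgroup P) (hmono : StrictMono Q)
    (hnorm : ∀ i, Q (Fin.last m) ≤ Subgroup.normalizer (Q i : Set P))
    (hlt : Q (Fin.last m) < ⨅ i, Subgroup.normalizer (Q i : Set P)) :
    StrictMono (appendNormalizer Q) ∧
    (∀ j : Fin (m + 2),
      appendNormalizer Q (Fin.last (m + 1)) ≤ Subgroup.normalizer (appendNormalizer Q j : Set P)) ∧
    ⨅ j, Subgroup.normalizer (appendNormalizer Q j : Set P) = ⨅ i, Subgroup.normalizer (Q i : Set P) :=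
  append_normalizer_is_normal_chain_general Q hmono hlt
end

section
/- Let p be a prime, P a finite p-group, and σ = (Q₀ < Q₁ < ⋯ < Q_m) a normal chain of subgroups of P (each Qᵢ normal in Q_m) with m ≥ 1. Suppose Q_m = N_P(σ), where N_P(σ) = ⋂_{i=0}^{m} N_P(Qᵢ). Then the truncated chain σ⁻ = (Q₀ < Q₁ < ⋯ < Q_{m-1}) satisfies N_P(σ⁻) = Q_m. -/
/-! `N_P(σ⁻)` contains `Q_m`, and its intersection with `N_P(Q_m)` is `N_P(σ) = Q_m`. So `Q_m` is
self-normalizing inside the nilpotent group `N_P(σ⁻)`, and the normalizer condition forces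
`Q_m = N_P(σ⁻)`. -/

theorem Fin.iInf_eq_iInf_castSucc_inf_last_s6 {α : Type*} [CompleteLattice α] {n : ℕ}
    (f : Fin (n + 1) → α) : ⨅ i, f i = (⨅ i : Fin n, f i.castSucc) ⊓ f (Fin.last n) := by
  refine le_antisymm (le_inf (le_iInf fun i => iInf_le _ _) (iInf_le _ _)) (le_iInf fun i => ?_)
  induction i using Fin.lastCases with
  | last => exact inf_le_right
  | cast j => exact inf_le_left.trans (iInf_le _ j)

namespace Subgroup

variable {G : Type*} [Group G]

theorem eq_of_le_of_inf_normalizer_le {H K : Subgroup G} [Group.IsNilpotent K]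
    (hHK : H ≤ K) (hself : K ⊓ normalizer (H : Set G) ≤ H) : H = K := by
  have hfix : normalizer (H.subgroupOf K : Set K) = H.subgroupOf K := by
    rw [← subgroupOf_normalizer_eq hHK]
    exact le_antisymm (fun x hx => hself ⟨x.2, hx⟩) (subgroupOf_mono _ le_normalizer)
  have htop : H.subgroupOf K = ⊤ :=
    normalizerCondition_iff_only_full_group_self_normalizing.mp
      Group.normalizerCondition_of_isNilpotent _ hfix
  exact le_antisymm hHK (subgroupOf_eq_top.mp htop)

end Subgroup

theorem truncated_chain_normalizer_general
    {p : ℕ} (hp : p.Prime) {P : Type*} [Group P] [Finite P] (hP : IsPGroup p P)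
    {m : ℕ}
    (Q : Fin (m + 1) → Subgroup P)
    (hself : Q (Fin.last m) = ⨅ i, Subgroup.normalizer (Q i : Set P)) :
    ⨅ i : Fin m, Subgroup.normalizer (Q i.castSucc : Set P) = Q (Fin.last m) := by
  have : Fact p.Prime := ⟨hp⟩
  have : Group.IsNilpotent P := hP.isNilpotent
  rw [Fin.iInf_eq_iInf_castSucc_inf_last_s6] at hself
  have hle : Q (Fin.last m) ≤ ⨅ i : Fin m, Subgroup.normalizer (Q i.castSucc : Set P) :=
    hself.trans_le inf_le_left
  exact (Subgroup.eq_of_le_of_inf_normalizer_le hle hself.ge).symm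

/-- If `σ = (Q₀ < ⋯ < Q_m)` (with `m ≥ 1`) is a normal chain of subgroups of a finite
`p`-group `P` (each `Qᵢ` normal in `Q_m`) whose last term equals its common normalizer
`N_P(σ) = ⋂ᵢ N_P(Qᵢ)`, then the truncated chain `σ⁻ = (Q₀ < ⋯ < Q_{m-1})` satisfies
`N_P(σ⁻) = Q_m`. -/
theorem truncated_chain_normalizer
    {p : ℕ} (hp : p.Prime) {P : Type*} [Group P] [Finite P] (hP : IsPGroup p P)
    {m : ℕ} (hm : 1 ≤ m)
    (Q : Fin (m + 1) → Subgroup P) (hmono : StrictMono Q)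
    (hnorm : ∀ i, Q (Fin.last m) ≤ Subgroup.normalizer (Q i : Set P))
    (hself : Q (Fin.last m) = ⨅ i, Subgroup.normalizer (Q i : Set P)) :
    ⨅ i : Fin m, Subgroup.normalizer (Q i.castSucc : Set P) = Q (Fin.last m) :=
  truncated_chain_normalizer_general hp hP Q hself
end

section
/- Let p be a prime and P a nontrivial finite p-group. On the set S of normal chains σ = (Q₀ < Q₁ < ⋯ < Q_m) of nontrivial subgroups of P, define a map n as follows: n fixes the chain (P) of length 0; for σ ≠ (P), if Q_m = N_P(σ) then n(σ) is obtained by removing the last term Q_m, and if Q_m < N_P(σ) then n(σ) is obtained by appending N_P(σ) as a new last term. Then n is well defined (in particular, if σ ≠ (P) and Q_m = N_P(σ) then m ≥ 1, and n(σ) is again a normal chain of nontrivial subgroups), n(n(σ)) = σ for all σ ∈ S, and the lengths satisfy |n(σ)| = |σ| ± 1 for all σ ≠ (P). -/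
/-- A normal chain `σ = (Q₀ < Q₁ < ⋯ < Q_m)` of nontrivial subgroups of a group `P`:
a strictly increasing tuple of nontrivial subgroups, each normal in the last term.
The field `len` is the length `m` of the chain. -/
structure NormalChain (P : Type*) [Group P] where
  len : ℕ
  Q : Fin (len + 1) → Subgroup P
  strictMono : StrictMono Q
  nontriv : ∀ i, Q i ≠ ⊥
  normal : ∀ i, Q (Fin.last len) ≤ Subgroup.normalizer (Q i : Set P)

/-- The normalizer `N_P(σ) = ⋂ᵢ N_P(Qᵢ)` of a normal chain. -/
def NormalChain.norm {P : Type*} [Group P] (σ : NormalChain P) : Subgroup P :=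
  ⨅ i, Subgroup.normalizer (σ.Q i : Set P)

/-- The length-zero chain `(P)` consisting of the whole group. -/
def NormalChain.top (P : Type*) [Group P] [Nontrivial P] : NormalChain P where
  len := 0
  Q := fun _ => ⊤
  strictMono := by
    intro i j h
    rw [Fin.lt_def] at h
    exact absurd h (by omega)
  nontriv := fun _ => top_ne_bot
  normal := fun _ => Subgroup.le_normalizer
/-!
Always `Q_m ≤ N := N_P(σ)`. If `Q_m < N`, appending `N` leaves the normalizer unchanged, so the
new chain ends in its normalizer and removing `N` undoes the step. If `Q_m = N` and `m ≥ 1`, the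
normalizer `N'` of the truncated chain contains `Q_m`, and `N_{N'}(Q_m) = N = Q_m`; in the
nilpotent group `N'` only `N'` itself is self-normalizing, so `N' = Q_m` and appending it restores
`σ`. Taking `P` in place of `N'`, the same fact shows that `(P)` is the only chain of length zero
with `Q_m = N`.
-/

theorem Subgroup.le_of_normalizer_inf_le {G : Type*} [Group G] {H K : Subgroup G}
    [Group.IsNilpotent K] (hHK : H ≤ K) (hself : normalizer (H : Set G) ⊓ K ≤ H) : K ≤ H := by
  have hcond := normalizerCondition_iff_only_full_group_self_normalizing.mp
    (Group.normalizerCondition_of_isNilpotent (G := K))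
  refine subgroupOf_eq_top.mp (hcond _ (le_antisymm ?_ le_normalizer))
  rw [← subgroupOf_normalizer_eq hHK]
  exact fun x hx => mem_subgroupOf.mpr (hself ⟨hx, x.2⟩)

theorem IsPGroup.le_of_normalizer_inf_le {p : ℕ} [Fact p.Prime] {G : Type*} [Group G]
    [Finite G] (hG : IsPGroup p G) {H K : Subgroup G} (hHK : H ≤ K)
    (hself : Subgroup.normalizer (H : Set G) ⊓ K ≤ H) : K ≤ H :=
  have := (hG.to_subgroup K).isNilpotent
  Subgroup.le_of_normalizer_inf_le hHK hself

namespace NormalChain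

open Subgroup

variable {P : Type*} [Group P]

theorem ext {σ τ : NormalChain P} (hlen : σ.len = τ.len)
    (hQ : ∀ i, σ.Q i = τ.Q (Fin.cast (by rw [hlen]) i)) : σ = τ := by
  cases σ
  cases τ
  dsimp only at hlen hQ
  subst hlen
  obtain rfl := funext fun i => (hQ i).trans (congrArg _ (Fin.cast_eq_self i))
  rfl

theorem last_le_norm (σ : NormalChain P) : σ.Q (Fin.last σ.len) ≤ σ.norm :=
  le_iInf σ.normal

theorem norm_le (σ : NormalChain P) (i : Fin (σ.len + 1)) :
    σ.norm ≤ normalizer (σ.Q i : Set P) :=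
  iInf_le _ i

def dropLast (σ : NormalChain P) (h : 1 ≤ σ.len) : NormalChain P where
  len := σ.len - 1
  Q := σ.Q ∘ Fin.castLE (by omega)
  strictMono := σ.strictMono.comp (Fin.strictMono_castLE _)
  nontriv _ := σ.nontriv _
  normal i := (σ.strictMono.monotone (Fin.le_last _)).trans (σ.normal _)

@[simp] theorem dropLast_len (σ : NormalChain P) (h : 1 ≤ σ.len) :
    (σ.dropLast h).len = σ.len - 1 := rfl

theorem last_le_norm_dropLast (σ : NormalChain P) (h : 1 ≤ σ.len) :
    σ.Q (Fin.last σ.len) ≤ (σ.dropLast h).norm :=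
  le_iInf fun _ => σ.normal _

theorem last_dropLast_lt_norm (σ : NormalChain P) (h : 1 ≤ σ.len) :
    (σ.dropLast h).Q (Fin.last (σ.dropLast h).len) < (σ.dropLast h).norm :=
  (σ.strictMono (Fin.mk_lt_mk.mpr (by simp; omega))).trans_le (σ.last_le_norm_dropLast h)

theorem norm_eq_normalizer_last_inf (σ : NormalChain P) (h : 1 ≤ σ.len) :
    σ.norm = normalizer (σ.Q (Fin.last σ.len) : Set P) ⊓ (σ.dropLast h).norm := by
  refine le_antisymm (le_inf (σ.norm_le _) (le_iInf fun i => σ.norm_le _)) (le_iInf fun i => ?_)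
  by_cases hi : (i : ℕ) < σ.len
  · exact inf_le_right.trans ((σ.dropLast h).norm_le ⟨i, by simp; omega⟩)
  · obtain rfl : i = Fin.last σ.len := Fin.ext (by simp; omega)
    exact inf_le_left

def extend (σ : NormalChain P) (h : σ.Q (Fin.last σ.len) < σ.norm) : NormalChain P where
  len := σ.len + 1
  Q := Fin.snoc σ.Q σ.norm
  strictMono := by
    intro i j hij
    induction j using Fin.lastCases with
    | last =>
      obtain ⟨i, rfl⟩ := Fin.exists_castSucc_eq.mpr hij.ne
      simpa using (σ.strictMono.monotone (Fin.le_last i)).trans_lt h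
    | cast j =>
      obtain ⟨i, rfl⟩ := Fin.exists_castSucc_eq.mpr (hij.trans (Fin.castSucc_lt_last j)).ne
      simpa using σ.strictMono (Fin.castSucc_lt_castSucc_iff.mp hij)
  nontriv i := by
    induction i using Fin.lastCases with
    | last => simpa using (bot_le.trans_lt h).ne'
    | cast i => simpa using σ.nontriv i
  normal i := by
    induction i using Fin.lastCases with
    | last => simpa using le_normalizer
    | cast i => simpa using σ.norm_le i

@[simp] theorem extend_len (σ : NormalChain P) (h : σ.Q (Fin.last σ.len) < σ.norm) :
    (σ.extend h).len = σ.len + 1 := rfl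

theorem extend_Q_castSucc (σ : NormalChain P) (h : σ.Q (Fin.last σ.len) < σ.norm)
    (i : Fin (σ.len + 1)) : (σ.extend h).Q i.castSucc = σ.Q i :=
  Fin.snoc_castSucc (α := fun _ => Subgroup P) _ _ _

theorem extend_Q_last (σ : NormalChain P) (h : σ.Q (Fin.last σ.len) < σ.norm) :
    (σ.extend h).Q (Fin.last (σ.extend h).len) = σ.norm :=
  Fin.snoc_last (α := fun _ => Subgroup P) _ _

theorem norm_extend (σ : NormalChain P) (h : σ.Q (Fin.last σ.len) < σ.norm) :
    (σ.extend h).norm = σ.norm := by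
  refine le_antisymm (le_iInf fun i => ?_) (le_iInf fun i => ?_)
  · simpa only [extend_Q_castSucc] using (σ.extend h).norm_le i.castSucc
  · induction i using Fin.lastCases with
    | last => exact (extend_Q_last σ h).symm ▸ le_normalizer
    | cast i => exact (extend_Q_castSucc σ h i).symm ▸ σ.norm_le i

theorem dropLast_extend (σ : NormalChain P) (h : σ.Q (Fin.last σ.len) < σ.norm)
    (h' : 1 ≤ (σ.extend h).len) : (σ.extend h).dropLast h' = σ :=
  ext (by simp) fun i => extend_Q_castSucc σ h _

theorem extend_dropLast (σ : NormalChain P) (h : 1 ≤ σ.len)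
    (h' : (σ.dropLast h).Q (Fin.last (σ.dropLast h).len) < (σ.dropLast h).norm)
    (hnorm : (σ.dropLast h).norm = σ.Q (Fin.last σ.len)) : (σ.dropLast h).extend h' = σ := by
  refine ext (by simp; omega) fun i => ?_
  induction i using Fin.lastCases with
  | last => rw [extend_Q_last, hnorm, Fin.cast_last]
  | cast i => exact extend_Q_castSucc _ h' i

open Classical in
/-- Only the chain `(P)` reaches the last branch, by `eq_top_of_len_eq_zero`. -/
noncomputable def toggle (σ : NormalChain P) : NormalChain P :=
  if h : σ.Q (Fin.last σ.len) < σ.norm then σ.extend h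
  else if h1 : 1 ≤ σ.len then σ.dropLast h1 else σ

theorem toggle_of_lt {σ : NormalChain P} (h : σ.Q (Fin.last σ.len) < σ.norm) :
    σ.toggle = σ.extend h :=
  dif_pos h

theorem toggle_of_eq {σ : NormalChain P} (heq : σ.Q (Fin.last σ.len) = σ.norm)
    (h1 : 1 ≤ σ.len) : σ.toggle = σ.dropLast h1 :=
  (dif_neg heq.not_lt).trans (dif_pos h1)

theorem toggle_of_len_eq_zero {σ : NormalChain P} (heq : σ.Q (Fin.last σ.len) = σ.norm)
    (h0 : σ.len = 0) : σ.toggle = σ :=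
  (dif_neg heq.not_lt).trans (dif_neg (by omega))

theorem toggle_top [Nontrivial P] : (top P).toggle = top P :=
  toggle_of_len_eq_zero (le_antisymm (last_le_norm _) le_top) rfl

section PGroup

variable {p : ℕ} [Fact p.Prime] [Finite P]

theorem eq_top_of_len_eq_zero [Nontrivial P] (hP : IsPGroup p P) {σ : NormalChain P}
    (h0 : σ.len = 0) (heq : σ.Q (Fin.last σ.len) = σ.norm) : σ = top P := by
  have hlast (i : Fin (σ.len + 1)) : i = Fin.last σ.len := Fin.ext (by simp; omega)
  have hself : normalizer (σ.Q (Fin.last σ.len) : Set P) ≤ σ.Q (Fin.last σ.len) :=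
    (le_iInf fun i => by rw [hlast i]).trans heq.ge
  have htop : σ.Q (Fin.last σ.len) = ⊤ :=
    top_le_iff.mp (hP.le_of_normalizer_inf_le le_top (inf_le_left.trans hself))
  exact ext h0 fun i => by rw [hlast i, htop]; rfl

theorem one_le_len_of_ne_top [Nontrivial P] (hP : IsPGroup p P) {σ : NormalChain P}
    (hne : σ ≠ top P) (heq : σ.Q (Fin.last σ.len) = σ.norm) : 1 ≤ σ.len :=
  Nat.one_le_iff_ne_zero.mpr fun h0 => hne (eq_top_of_len_eq_zero hP h0 heq)

theorem norm_dropLast (hP : IsPGroup p P) {σ : NormalChain P} (h : 1 ≤ σ.len)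
    (heq : σ.Q (Fin.last σ.len) = σ.norm) : (σ.dropLast h).norm = σ.Q (Fin.last σ.len) :=
  le_antisymm (hP.le_of_normalizer_inf_le (σ.last_le_norm_dropLast h)
    (by rw [← norm_eq_normalizer_last_inf, heq])) (σ.last_le_norm_dropLast h)

theorem toggle_toggle (hP : IsPGroup p P) (σ : NormalChain P) : σ.toggle.toggle = σ := by
  rcases σ.last_le_norm.lt_or_eq with hlt | heq
  · have heq' := (σ.extend_Q_last hlt).trans (σ.norm_extend hlt).symm
    rw [toggle_of_lt hlt, toggle_of_eq heq' (by simp)]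
    exact dropLast_extend σ hlt _
  · rcases Nat.eq_zero_or_pos σ.len with h0 | h1
    · rw [toggle_of_len_eq_zero heq h0, toggle_of_len_eq_zero heq h0]
    · rw [toggle_of_eq heq h1, toggle_of_lt (σ.last_dropLast_lt_norm h1),
        extend_dropLast _ _ _ (norm_dropLast hP h1 heq)]

end PGroup

end NormalChain

/-- For a nontrivial finite `p`-group `P`, there is a well-defined involution `n` on the
set of normal chains of nontrivial subgroups of `P`: it fixes the chain `(P)`; for
`σ ≠ (P)`, if the last term `Q_m` equals `N_P(σ)` then `n σ` removes the last term
(in particular `m ≥ 1` in this case), and if `Q_m < N_P(σ)` then `n σ` appends `N_P(σ)`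
as a new last term. Moreover `n (n σ) = σ` and `|n σ| = |σ| ± 1` for all `σ ≠ (P)`. -/
theorem exists_normal_chain_involution
    {p : ℕ} (hp : p.Prime) {P : Type*} [Group P] [Finite P] [Nontrivial P]
    (hP : IsPGroup p P) :
    ∃ n : NormalChain P → NormalChain P,
      n (NormalChain.top P) = NormalChain.top P ∧
      (∀ σ : NormalChain P, σ ≠ NormalChain.top P →
        σ.Q (Fin.last σ.len) = σ.norm →
          1 ≤ σ.len ∧ (n σ).len + 1 = σ.len ∧
          ∀ (i : Fin ((n σ).len + 1)) (h : (i : ℕ) < σ.len + 1),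
            (n σ).Q i = σ.Q ⟨i, h⟩) ∧
      (∀ σ : NormalChain P, σ.Q (Fin.last σ.len) < σ.norm →
          (n σ).len = σ.len + 1 ∧
          (∀ (i : Fin (σ.len + 1)) (h : (i : ℕ) < (n σ).len + 1),
            (n σ).Q ⟨i, h⟩ = σ.Q i) ∧
          (n σ).Q (Fin.last (n σ).len) = σ.norm) ∧
      (∀ σ : NormalChain P, n (n σ) = σ) ∧
      (∀ σ : NormalChain P, σ ≠ NormalChain.top P →
        (n σ).len = σ.len + 1 ∨ (n σ).len + 1 = σ.len) := by
  have := Fact.mk hp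
  refine ⟨NormalChain.toggle, NormalChain.toggle_top, fun σ hne heq => ?_, fun σ hlt => ?_,
    NormalChain.toggle_toggle hP, fun σ hne => ?_⟩
  · have h1 := NormalChain.one_le_len_of_ne_top hP hne heq
    rw [NormalChain.toggle_of_eq heq h1]
    exact ⟨h1, by simp; omega, fun _ _ => rfl⟩
  · rw [NormalChain.toggle_of_lt hlt]
    exact ⟨rfl, fun i _ => σ.extend_Q_castSucc hlt i, σ.extend_Q_last hlt⟩
  · rcases σ.last_le_norm.lt_or_eq with hlt | heq
    · exact .inl (by rw [NormalChain.toggle_of_lt hlt]; rfl)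
    · have h1 := NormalChain.one_le_len_of_ne_top hP hne heq
      exact .inr (by rw [NormalChain.toggle_of_eq heq h1]; simp; omega)
end

section
/- Let p be a prime and P a nontrivial finite p-group. Let S be the (finite) set of normal chains of nontrivial subgroups of P, and let n : S → S be the involution that fixes the chain (P) and otherwise removes the last term Q_m when Q_m = N_P(σ) and appends N_P(σ) when Q_m < N_P(σ). If f : S → ℤ satisfies f(n(σ)) = f(σ) for all σ ∈ S, then ∑_{σ ∈ S} (-1)^{|σ|} f(σ) = f((P)), where |σ| denotes the length of the chain σ. -/
/-!
The map `n` pairs each chain `σ ≠ (P)` with a chain whose length differs from `|σ|` by one,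
so the terms of the alternating sum cancel in pairs. The one point that needs `P` to be a
`p`-group is that `n` is an involution in the removal case `Q_m = N_P(σ)`: if `τ` is `σ` with
`Q_m` removed, then `N_P(τ) ∩ N_P(Q_m) = N_P(σ) = Q_m ≤ N_P(τ)`, so `Q_m` is self-normalizing
in the nilpotent group `N_P(τ)`, hence equal to it, and appending `N_P(τ)` to `τ` gives back `σ`.
-/

open Subgroup

theorem IsPGroup.eq_of_inf_normalizer_le {p : ℕ} [Fact p.Prime] {P : Type*} [Group P]
    [Finite P] (hP : IsPGroup p P) {H K : Subgroup P} (hHK : H ≤ K)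
    (hN : K ⊓ normalizer (H : Set P) ≤ H) : K = H := by
  have : Group.IsNilpotent K := (hP.to_subgroup K).isNilpotent
  have hself : normalizer (H.subgroupOf K : Set K) = H.subgroupOf K := by
    refine le_antisymm ?_ le_normalizer
    rw [← subgroupOf_normalizer_eq hHK]
    intro x hx
    exact mem_subgroupOf.mpr (hN ⟨x.2, mem_subgroupOf.mp hx⟩)
  have htop := normalizerCondition_iff_only_full_group_self_normalizing.mp
    Group.normalizerCondition_of_isNilpotent _ hself
  exact le_antisymm (subgroupOf_eq_top.mp htop) hHK

theorem finsum_eq_of_sign_reversing_involution {α M : Type*} [AddCommGroup M] [Finite α]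
    (w : α → M) (a : α) (n : α → α) (hne : ∀ x ≠ a, n x ≠ a)
    (hinv : ∀ x ≠ a, n (n x) = x) (hfix : ∀ x ≠ a, n x ≠ x)
    (hneg : ∀ x ≠ a, w (n x) = -w x) : ∑ᶠ x, w x = w a := by
  classical
  have := Fintype.ofFinite α
  rw [finsum_eq_sum_of_fintype, ← Finset.add_sum_erase _ _ (Finset.mem_univ a),
    add_eq_left]
  refine Finset.sum_involution (fun x _ => n x) (fun x hx => ?_) (fun x hx _ => ?_)
    (fun x hx => ?_) (fun x hx => ?_)
  all_goals have hx : x ≠ a := Finset.ne_of_mem_erase hx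
  · rw [hneg x hx, add_neg_cancel]
  · exact hfix x hx
  · exact Finset.mem_erase.mpr ⟨hne x hx, Finset.mem_univ _⟩
  · exact hinv x hx

namespace NormalChain

variable {P : Type*} [Group P]

theorem ext_of_len_eq {σ τ : NormalChain P} (hlen : σ.len = τ.len)
    (hQ : ∀ (i : ℕ) (hσ : i < σ.len + 1) (hτ : i < τ.len + 1), σ.Q ⟨i, hσ⟩ = τ.Q ⟨i, hτ⟩) :
    σ = τ := by
  rcases σ with ⟨l, Q⟩
  rcases τ with ⟨l', Q'⟩
  subst hlen
  obtain rfl : Q = Q' := funext fun i => hQ i i.2 i.2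
  rfl

instance [Finite P] : Finite (NormalChain P) := by
  have hlen (σ : NormalChain P) : σ.len + 1 ≤ Nat.card (Subgroup P) := by
    simpa using Nat.card_le_card_of_injective _ σ.strictMono.injective
  have := (List.finite_length_le (Subgroup P) (Nat.card (Subgroup P))).to_subtype
  refine Finite.of_injective (fun σ : NormalChain P =>
    (⟨List.ofFn σ.Q, by simpa using hlen σ⟩ :
      {l : List (Subgroup P) | l.length ≤ Nat.card (Subgroup P)})) fun σ τ h => ?_
  obtain ⟨hl, hQ⟩ := Sigma.mk.inj_iff.mp (List.ofFn_inj'.mp (congrArg Subtype.val h))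
  exact ext_of_len_eq (by omega) fun i hσ _ => (Fin.heq_fun_iff hl).mp hQ ⟨i, hσ⟩

/-- `τ.IsTrunc σ`: the chain `τ` is `σ` with its last term removed. -/
def IsTrunc (τ σ : NormalChain P) : Prop :=
  τ.len + 1 = σ.len ∧ ∀ (i : Fin (τ.len + 1)) (h : (i : ℕ) < σ.len + 1), τ.Q i = σ.Q ⟨i, h⟩

namespace IsTrunc

variable {σ σ' τ τ' : NormalChain P}

theorem neg_one_pow_len (h : τ.IsTrunc σ) : (-1 : ℤ) ^ σ.len = -(-1) ^ τ.len := by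
  rw [← h.1, pow_succ, mul_neg_one]

theorem ne (h : τ.IsTrunc σ) : τ ≠ σ := by
  rintro rfl
  exact absurd h.1 (by omega)

theorem last_lt (h : τ.IsTrunc σ) : τ.Q (Fin.last τ.len) < σ.Q (Fin.last σ.len) := by
  have := h.1
  rw [h.2 _ (by simp; omega)]
  exact σ.strictMono (by simp [Fin.lt_def]; omega)

theorem norm_eq (h : τ.IsTrunc σ) :
    σ.norm = τ.norm ⊓ normalizer (σ.Q (Fin.last σ.len) : Set P) := by
  have := h.1
  refine le_antisymm (le_inf (le_iInf fun i => ?_) (iInf_le _ _)) (le_iInf fun j => ?_)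
  · rw [h.2 i (by omega)]
    exact iInf_le _ _
  by_cases hj : (j : ℕ) < τ.len + 1
  · have hτ := iInf_le (fun i => normalizer (τ.Q i : Set P)) ⟨j, hj⟩
    rw [h.2 _ j.2] at hτ
    exact inf_le_left.trans hτ
  · rw [show j = Fin.last σ.len from Fin.ext (by simp; omega)]
    exact inf_le_right

theorem left_unique (h : τ.IsTrunc σ) (h' : τ'.IsTrunc σ) : τ = τ' :=
  ext_of_len_eq (by have := h.1; have := h'.1; omega) fun i hτ hτ' => by
    rw [h.2 ⟨i, hτ⟩ (by have := h.1; omega), h'.2 ⟨i, hτ'⟩ (by have := h'.1; omega)]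

theorem eq_of_last_eq (h : τ.IsTrunc σ) (h' : τ.IsTrunc σ')
    (hlast : σ.Q (Fin.last σ.len) = σ'.Q (Fin.last σ'.len)) : σ = σ' := by
  refine ext_of_len_eq (by have := h.1; have := h'.1; omega) fun i hσ hσ' => ?_
  by_cases hi : i < τ.len + 1
  · rw [← h.2 ⟨i, hi⟩, ← h'.2 ⟨i, hi⟩]
  · have := h.1
    have := h'.1
    rwa [show (⟨i, hσ⟩ : Fin _) = Fin.last σ.len from Fin.ext (by simp; omega),
      show (⟨i, hσ'⟩ : Fin _) = Fin.last σ'.len from Fin.ext (by simp; omega)]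

theorem norm_eq_last_of_last_eq_norm {p : ℕ} [Fact p.Prime] [Finite P] (hP : IsPGroup p P)
    (h : τ.IsTrunc σ) (hσ : σ.Q (Fin.last σ.len) = σ.norm) :
    τ.norm = σ.Q (Fin.last σ.len) := by
  refine hP.eq_of_inf_normalizer_le ?_ ?_
  · rw [hσ, h.norm_eq]
    exact inf_le_left
  · rw [← h.norm_eq]
    exact hσ.ge

variable [Nontrivial P]

theorem right_ne_top (h : τ.IsTrunc σ) : σ ≠ top P := by
  rintro rfl
  exact absurd h.1 (by simp [top])

theorem left_ne_top (h : τ.IsTrunc σ) : τ ≠ top P := by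
  rintro rfl
  exact not_top_lt h.last_lt

end IsTrunc

section Involution

variable [Nontrivial P] {n : NormalChain P → NormalChain P}

theorem isTrunc_or_isTrunc_apply
    (hremove : ∀ σ : NormalChain P, σ ≠ top P → σ.Q (Fin.last σ.len) = σ.norm → (n σ).IsTrunc σ)
    (happend : ∀ σ : NormalChain P, σ.Q (Fin.last σ.len) < σ.norm → σ.IsTrunc (n σ))
    {σ : NormalChain P} (hσ : σ ≠ top P) : (n σ).IsTrunc σ ∨ σ.IsTrunc (n σ) := by
  rcases σ.last_le_norm.lt_or_eq with hlt | heq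
  · exact Or.inr (happend σ hlt)
  · exact Or.inl (hremove σ hσ heq)

theorem apply_apply_eq_self {p : ℕ} [Fact p.Prime] [Finite P] (hP : IsPGroup p P)
    (hremove : ∀ σ : NormalChain P, σ ≠ top P → σ.Q (Fin.last σ.len) = σ.norm → (n σ).IsTrunc σ)
    (happend : ∀ σ : NormalChain P, σ.Q (Fin.last σ.len) < σ.norm →
      σ.IsTrunc (n σ) ∧ (n σ).Q (Fin.last (n σ).len) = σ.norm)
    {σ : NormalChain P} (hσ : σ ≠ top P) : n (n σ) = σ := by
  rcases σ.last_le_norm.lt_or_eq with hlt | heq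
  · obtain ⟨hT, hlast⟩ := happend σ hlt
    have hnorm : (n σ).norm = σ.norm := by
      rw [hT.norm_eq, hlast, inf_eq_left]
      exact le_normalizer
    exact (hremove _ hT.right_ne_top (hlast.trans hnorm.symm)).left_unique hT
  · have hT := hremove σ hσ heq
    have hnorm := hT.norm_eq_last_of_last_eq_norm hP heq
    obtain ⟨hT', hlast⟩ := happend (n σ) (hnorm ▸ hT.last_lt)
    exact (hT'.eq_of_last_eq hT (hlast.trans hnorm))

end Involution

end NormalChain

theorem alternating_sum_over_normal_chains_general
    {p : ℕ} (hp : p.Prime) {P : Type*} [Group P] [Finite P] [Nontrivial P]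
    (hP : IsPGroup p P)
    (n : NormalChain P → NormalChain P)
    (hremove : ∀ σ : NormalChain P, σ ≠ NormalChain.top P →
      σ.Q (Fin.last σ.len) = σ.norm →
        (n σ).len + 1 = σ.len ∧
        ∀ (i : Fin ((n σ).len + 1)) (h : (i : ℕ) < σ.len + 1),
          (n σ).Q i = σ.Q ⟨i, h⟩)
    (happend : ∀ σ : NormalChain P, σ.Q (Fin.last σ.len) < σ.norm →
        (n σ).len = σ.len + 1 ∧
        (∀ (i : Fin (σ.len + 1)) (h : (i : ℕ) < (n σ).len + 1),
          (n σ).Q ⟨i, h⟩ = σ.Q i) ∧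
        (n σ).Q (Fin.last (n σ).len) = σ.norm)
    (f : NormalChain P → ℤ) (hf : ∀ σ : NormalChain P, f (n σ) = f σ) :
    ∑ᶠ σ : NormalChain P, (-1 : ℤ) ^ σ.len * f σ = f (NormalChain.top P) := by
  have := Fact.mk hp
  have happend' (σ : NormalChain P) (hσ : σ.Q (Fin.last σ.len) < σ.norm) :
      σ.IsTrunc (n σ) ∧ (n σ).Q (Fin.last (n σ).len) = σ.norm :=
    have ⟨hlen, hQ, hlast⟩ := happend σ hσ
    ⟨⟨hlen.symm, fun i h => (hQ i h).symm⟩, hlast⟩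
  have hpair (σ : NormalChain P) (hσ : σ ≠ NormalChain.top P) :=
    NormalChain.isTrunc_or_isTrunc_apply hremove (fun σ h => (happend' σ h).1) hσ
  refine (finsum_eq_of_sign_reversing_involution _ _ n (fun σ hσ => ?_)
    (fun σ hσ => NormalChain.apply_apply_eq_self hP hremove happend' hσ)
    (fun σ hσ => ?_) (fun σ hσ => ?_)).trans (one_mul _)
  · exact (hpair σ hσ).elim (·.left_ne_top) (·.right_ne_top)
  · exact (hpair σ hσ).elim (·.ne) (·.ne.symm)
  · rcases hpair σ hσ with h | h <;> rw [hf, h.neg_one_pow_len] <;> ring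

/-- The cancellation principle (the paper's Lemma 5) for the set `S` of normal chains of
nontrivial subgroups of a nontrivial finite `p`-group `P`: if `n : S → S` is the
involution fixing the chain `(P)` and otherwise removing the last term `Q_m` when
`Q_m = N_P(σ)` and appending `N_P(σ)` when `Q_m < N_P(σ)`, then for every `f : S → ℤ`
with `f (n σ) = f σ` one has `∑_{σ ∈ S} (-1)^{|σ|} f σ = f (P)`.  (The set `S` is
finite, and the sum is the finite sum `∑ᶠ` over all of `S`.) -/
theorem alternating_sum_over_normal_chains
    {p : ℕ} (hp : p.Prime) {P : Type*} [Group P] [Finite P] [Nontrivial P]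
    (hP : IsPGroup p P)
    (n : NormalChain P → NormalChain P)
    (hntop : n (NormalChain.top P) = NormalChain.top P)
    (hremove : ∀ σ : NormalChain P, σ ≠ NormalChain.top P →
      σ.Q (Fin.last σ.len) = σ.norm →
        (n σ).len + 1 = σ.len ∧
        ∀ (i : Fin ((n σ).len + 1)) (h : (i : ℕ) < σ.len + 1),
          (n σ).Q i = σ.Q ⟨i, h⟩)
    (happend : ∀ σ : NormalChain P, σ.Q (Fin.last σ.len) < σ.norm →
        (n σ).len = σ.len + 1 ∧
        (∀ (i : Fin (σ.len + 1)) (h : (i : ℕ) < (n σ).len + 1),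
          (n σ).Q ⟨i, h⟩ = σ.Q i) ∧
        (n σ).Q (Fin.last (n σ).len) = σ.norm)
    (f : NormalChain P → ℤ) (hf : ∀ σ : NormalChain P, f (n σ) = f σ) :
    ∑ᶠ σ : NormalChain P, (-1 : ℤ) ^ σ.len * f σ = f (NormalChain.top P) :=
  alternating_sum_over_normal_chains_general hp hP n hremove happend f hf
end
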